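/- arXiv:1405.7327 — 2 statements merged into one kernel-verified Lean document; each statement's English description precedes it below -/
import Mathlib

section
/- Let 1 ≤ p < ∞ and let H be a separable complex Hilbert space. For every u ∈ U^p(ℝ;H) and every finite partition P = {τ_1 < τ_2 < ⋯ < τ_n} of ℝ, the step function u_P = Σ_{j=1}^n u(τ_j) χ_{[τ_j, τ_{j+1})} (with τ_{n+1} := ∞) belongs to U^p(ℝ;H) and satisfies ‖u_P‖_{U^p(ℝ;H)} ≤ ‖u‖_{U^p(ℝ;H)}. -/
open Filter

/-- A `U^p`-atom. -/
def IsUpAtom {H : Type*} [NormedAddCommGroup H] (p : ℝ) (a : ℝ → H) : Prop :=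
  ∃ (K : ℕ) (t : Fin (K + 1) → EReal) (φ : Fin K → H),
    StrictMono t ∧ t 0 ≠ ⊥ ∧ (∑ k, ‖φ k‖ ^ p) = 1 ∧
    ∀ x : ℝ, a x = ∑ k : Fin K,
      if t k.castSucc ≤ (x : EReal) ∧ (x : EReal) < t k.succ then φ k else 0

/-- An atomic representation of `u` in `U^p`. -/
def IsUpRep {H : Type*} [NormedAddCommGroup H] [InnerProductSpace ℂ H]
    (p : ℝ) (u : ℝ → H) (c : ℕ → ℂ) (a : ℕ → ℝ → H) : Prop :=
  Summable (fun j => ‖c j‖) ∧ (∀ j, IsUpAtom p (a j)) ∧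
    TendstoUniformly (fun N x => ∑ j ∈ Finset.range N, c j • a j x) u atTop

/-- Membership in the atomic space `U^p(ℝ;H)`. -/
def MemUp {H : Type*} [NormedAddCommGroup H] [InnerProductSpace ℂ H]
    (p : ℝ) (u : ℝ → H) : Prop :=
  ∃ c a, IsUpRep p u c a

/-- The `U^p(ℝ;H)` norm. -/
noncomputable def UpNorm {H : Type*} [NormedAddCommGroup H] [InnerProductSpace ℂ H]
    (p : ℝ) (u : ℝ → H) : ℝ :=
  sInf { r | ∃ c a, IsUpRep p u c a ∧ r = ∑' j, ‖c j‖ }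

/-- The restriction norm `‖u‖_{U^p(I)}`. -/
noncomputable def UpNormOn {H : Type*} [NormedAddCommGroup H] [InnerProductSpace ℂ H]
    (p : ℝ) (I : Set ℝ) (u : ℝ → H) : ℝ :=
  sInf { r | ∃ v : ℝ → H, MemUp p v ∧ Set.EqOn v u I ∧ r = UpNorm p v }

/-- `u` restricted to `I` extends to an element of `U^p(ℝ;H)`. -/
def MemUpOn {H : Type*} [NormedAddCommGroup H] [InnerProductSpace ℂ H]
    (p : ℝ) (I : Set ℝ) (u : ℝ → H) : Prop :=
  ∃ v : ℝ → H, MemUp p v ∧ Set.EqOn v u I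

/-- The set of `V^p` partition sums. -/
def VpSums {H : Type*} [NormedAddCommGroup H] (p : ℝ) (u : ℝ → H) : Set ℝ :=
  { r | ∃ (K : ℕ) (t : Fin (K + 1) → ℝ), StrictMono t ∧
      (r = (∑ k : Fin K, ‖u (t k.succ) - u (t k.castSucc)‖ ^ p) ^ (1 / p) ∨
       r = (∑ k : Fin K, ‖u (t k.succ) - u (t k.castSucc)‖ ^ p
              + ‖u (t (Fin.last K))‖ ^ p) ^ (1 / p)) }

def MemVp {H : Type*} [NormedAddCommGroup H] (p : ℝ) (u : ℝ → H) : Prop :=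
  BddAbove (VpSums p u)

noncomputable def VpNorm {H : Type*} [NormedAddCommGroup H] (p : ℝ) (u : ℝ → H) : ℝ :=
  sSup (VpSums p u)

def MemVpRC {H : Type*} [NormedAddCommGroup H] (p : ℝ) (u : ℝ → H) : Prop :=
  MemVp p u ∧ (∀ x : ℝ, ContinuousWithinAt u (Set.Ici x) x) ∧
    Tendsto u atBot (nhds 0)

/-- The step function associated to `u` and a finite partition `τ`. -/
noncomputable def stepApprox {H : Type*} [NormedAddCommGroup H]
    (u : ℝ → H) {n : ℕ} (τ : Fin n → ℝ) : ℝ → H :=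
  fun x => ∑ j : Fin n,
    if τ j ≤ x ∧ (∀ k, j < k → x < τ k) then u (τ j) else 0
section Helpers

variable {H : Type*} [NormedAddCommGroup H]

lemma cond_unique {n : ℕ} {τ : Fin n → ℝ} {x : ℝ} {j j' : Fin n}
    (h : τ j ≤ x ∧ ∀ k, j < k → x < τ k) (h' : τ j' ≤ x ∧ ∀ k, j' < k → x < τ k) :
    j = j' := by
  by_contra hne
  rcases lt_or_gt_of_ne hne with hlt | hlt
  · exact absurd h'.1 (not_le.2 (h.2 j' hlt))
  · exact absurd h.1 (not_le.2 (h'.2 j hlt))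

lemma stepApprox_eq_of_cond (v : ℝ → H) {n : ℕ} {τ : Fin n → ℝ} {x : ℝ} {j₀ : Fin n}
    (h : τ j₀ ≤ x ∧ ∀ k, j₀ < k → x < τ k) : stepApprox v τ x = v (τ j₀) := by
  classical
  unfold stepApprox
  rw [Finset.sum_eq_single_of_mem j₀ (Finset.mem_univ _)
    (fun j _ hne => if_neg (fun hc => hne (cond_unique hc h)))]
  exact if_pos h

lemma stepApprox_eq_zero (v : ℝ → H) {n : ℕ} {τ : Fin n → ℝ} {x : ℝ}
    (h : ¬ ∃ j, τ j ≤ x) : stepApprox v τ x = 0 := by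
  classical
  exact Finset.sum_eq_zero fun j _ => if_neg (fun hc => h ⟨j, hc.1⟩)

end Helpers
lemma exists_cond {n : ℕ} {τ : Fin n → ℝ} {x : ℝ} (h : ∃ j, τ j ≤ x) :
    ∃ j₀ : Fin n, τ j₀ ≤ x ∧ ∀ k, j₀ < k → x < τ k := by
  classical
  have hne : (Finset.univ.filter fun j => τ j ≤ x).Nonempty := by
    obtain ⟨j, hj⟩ := h
    exact ⟨j, Finset.mem_filter.2 ⟨Finset.mem_univ _, hj⟩⟩
  set j₀ := (Finset.univ.filter fun j => τ j ≤ x).max' hne with hj₀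
  refine ⟨j₀, (Finset.mem_filter.1 ((Finset.univ.filter fun j => τ j ≤ x).max'_mem hne)).2, ?_⟩
  intro k hk
  by_contra hc
  have hk2 : k ≤ j₀ := Finset.le_max' (Finset.univ.filter fun j => τ j ≤ x) k (Finset.mem_filter.2 ⟨Finset.mem_univ _, not_lt.1 hc⟩)
  exact absurd hk (not_lt.2 hk2)

lemma cond_le {n : ℕ} {τ : Fin n → ℝ} {x : ℝ} {j₀ : Fin n}
    (h : τ j₀ ≤ x ∧ ∀ k, j₀ < k → x < τ k) {j : Fin n} (hj : τ j ≤ x) : j ≤ j₀ := by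
  by_contra hc
  exact absurd hj (not_le.2 (h.2 j (not_le.1 hc)))
lemma atom_step {H : Type*} [NormedAddCommGroup H] [InnerProductSpace ℂ H]
    {p : ℝ} (hp : 1 ≤ p) {a : ℝ → H} (ha : IsUpAtom p a)
    {n : ℕ} {τ : Fin n → ℝ} (hτ : StrictMono τ) :
    ∃ (l : ℝ) (b : ℝ → H), 0 ≤ l ∧ l ≤ 1 ∧ IsUpAtom p b ∧
      ∀ x, stepApprox a τ x = l • b x := by
  classical
  obtain ⟨K, t, φ, ht, hbot, hsum, hform⟩ := ha
  have hp0 : p ≠ 0 := (lt_of_lt_of_le one_pos hp).ne'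
  set J : Fin (K+1) → Finset (Fin n) :=
    fun k => Finset.univ.filter fun j => t k ≤ ((τ j : ℝ) : EReal) with hJdef
  set r : Fin (K+1) → EReal :=
    fun k => if h : (J k).Nonempty then ((τ ((J k).min' h) : ℝ) : EReal) else ⊤ with hrdef
  have hrle : ∀ (k) (j : Fin n), t k ≤ (τ j : EReal) → r k ≤ (τ j : EReal) := by
    intro k j hj
    have hjm : j ∈ J k := Finset.mem_filter.2 ⟨Finset.mem_univ _, hj⟩
    rw [hrdef]; dsimp only
    rw [dif_pos ⟨j, hjm⟩]
    exact EReal.coe_le_coe_iff.2 (hτ.monotone (Finset.min'_le _ _ hjm))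
  have hrex : ∀ (k) (x : ℝ), r k ≤ (x : EReal) →
      ∃ j, t k ≤ (τ j : EReal) ∧ τ j ≤ x ∧ r k = (τ j : EReal) := by
    intro k x hk
    rw [hrdef] at hk; dsimp only at hk
    by_cases h : (J k).Nonempty
    · rw [dif_pos h] at hk
      refine ⟨(J k).min' h, (Finset.mem_filter.1 ((J k).min'_mem h)).2,
        EReal.coe_le_coe_iff.1 hk, ?_⟩
      rw [hrdef]; dsimp only; rw [dif_pos h]
    · rw [dif_neg h] at hk
      exact absurd hk (not_le.2 (EReal.coe_lt_top x))
  have hrmono : Monotone r := by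
    intro k k' hkk
    by_cases h' : (J k').Nonempty
    · have hsub : J k' ⊆ J k := fun j hj =>
        Finset.mem_filter.2 ⟨Finset.mem_univ _,
          le_trans (ht.monotone hkk) (Finset.mem_filter.1 hj).2⟩
      have h : (J k).Nonempty := h'.mono hsub
      rw [hrdef]; dsimp only; rw [dif_pos h, dif_pos h']
      exact EReal.coe_le_coe_iff.2 (hτ.monotone (Finset.min'_subset h' hsub))
    · rw [hrdef]; dsimp only; rw [dif_neg h']; exact le_top
  have hrbot : ∀ k, r k ≠ ⊥ := by
    intro k; rw [hrdef]; dsimp only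
    by_cases h : (J k).Nonempty
    · rw [dif_pos h]; exact EReal.coe_ne_bot _
    · rw [dif_neg h]; exact (by simp)
  have hstar : ∀ x : ℝ, stepApprox a τ x =
      ∑ k : Fin K, if r k.castSucc ≤ (x : EReal) ∧ (x : EReal) < r k.succ then φ k else 0 := by
    intro x
    by_cases hex : ∃ j, τ j ≤ x
    · obtain ⟨j₀, hj₀⟩ := exists_cond hex
      rw [stepApprox_eq_of_cond _ hj₀, hform (τ j₀)]
      refine Finset.sum_congr rfl fun k _ => ?_
      refine if_congr ?_ rfl rfl
      constructor
      · rintro ⟨h1, h2⟩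
        constructor
        · exact le_trans (hrle _ _ h1) (EReal.coe_le_coe_iff.2 hj₀.1)
        · by_contra hc
          push_neg at hc
          obtain ⟨j₁, ha1, ha2, _⟩ := hrex _ _ hc
          have hle : j₁ ≤ j₀ := cond_le hj₀ ha2
          exact absurd (le_trans ha1 (EReal.coe_le_coe_iff.2 (hτ.monotone hle))) (not_le.2 h2)
      · rintro ⟨h1, h2⟩
        obtain ⟨j₁, ha1, ha2, _⟩ := hrex _ _ h1
        constructor
        · exact le_trans ha1 (EReal.coe_le_coe_iff.2 (hτ.monotone (cond_le hj₀ ha2)))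
        · by_contra hc
          push_neg at hc
          exact absurd (le_trans (hrle _ _ hc) (EReal.coe_le_coe_iff.2 hj₀.1)) (not_le.2 h2)
    · rw [stepApprox_eq_zero _ hex]
      symm
      refine Finset.sum_eq_zero fun k _ => if_neg fun hc => ?_
      obtain ⟨j, _, hj2, _⟩ := hrex _ _ hc.1
      exact hex ⟨j, hj2⟩
  set S : Finset (Fin K) := Finset.univ.filter (fun k => r k.castSucc < r k.succ) with hSdef
  have hcond_mem : ∀ (x : ℝ) (k : Fin K),
      (r k.castSucc ≤ (x : EReal) ∧ (x : EReal) < r k.succ) → k ∈ S :=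
    fun x k hc => Finset.mem_filter.2 ⟨Finset.mem_univ _, lt_of_le_of_lt hc.1 hc.2⟩
  have hnotS : ∀ q : Fin K, q ∉ S → r q.castSucc = r q.succ := by
    intro q hq
    refine le_antisymm (hrmono (Fin.castSucc_le_succ q)) (not_lt.1 fun hlt => hq ?_)
    exact Finset.mem_filter.2 ⟨Finset.mem_univ _, hlt⟩
  have gap : ∀ (dd : ℕ) (c d : Fin (K+1)), (d : ℕ) = (c : ℕ) + dd →
      (∀ q : Fin K, (c : ℕ) ≤ (q : ℕ) → (q : ℕ) < (d : ℕ) → q ∉ S) → r c = r d := by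
    intro dd
    induction dd with
    | zero => intro c d hcd _; congr 1; exact Fin.ext (by omega)
    | succ dd ih =>
      intro c d hcd hq
      have hcK : (c : ℕ) < K := by have := d.isLt; omega
      have h1 : c = (Fin.castSucc ⟨(c : ℕ), hcK⟩) := Fin.ext (by simp)
      have h2 : r (Fin.castSucc ⟨(c : ℕ), hcK⟩) = r (Fin.succ ⟨(c : ℕ), hcK⟩) :=
        hnotS _ (hq _ (by simp) (by simp; omega))
      rw [h1, h2]
      exact ih (Fin.succ ⟨(c : ℕ), hcK⟩) d (by simp [Fin.val_succ]; omega)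
        (fun q' hq1 hq2 => hq q' (by simp [Fin.val_succ] at hq1 ⊢; omega) hq2)
  set L := ∑ k ∈ S, ‖φ k‖ ^ p with hLdef
  have hL0 : 0 ≤ L := Finset.sum_nonneg fun k _ => Real.rpow_nonneg (norm_nonneg _) _
  have hL1 : L ≤ 1 := by
    rw [← hsum]
    exact Finset.sum_le_sum_of_subset_of_nonneg (Finset.subset_univ S)
      (fun k _ _ => Real.rpow_nonneg (norm_nonneg _) _)
  by_cases hLz : L = 0
  · refine ⟨0, a, le_refl 0, zero_le_one, ⟨K, t, φ, ht, hbot, hsum, hform⟩, fun x => ?_⟩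
    rw [zero_smul, hstar x]
    refine Finset.sum_eq_zero fun k _ => ?_
    by_cases hc : (r k.castSucc ≤ (x : EReal) ∧ (x : EReal) < r k.succ)
    · rw [if_pos hc]
      have hk : k ∈ S := hcond_mem x k hc
      have h0 : ‖φ k‖ ^ p = 0 :=
        (Finset.sum_eq_zero_iff_of_nonneg
          (fun k _ => Real.rpow_nonneg (norm_nonneg _) _)).1 hLz k hk
      exact norm_eq_zero.1 ((Real.rpow_eq_zero (norm_nonneg _) hp0).1 h0)
    · rw [if_neg hc]
  · -- non-degenerate case
    have hL : 0 < L := lt_of_le_of_ne hL0 (Ne.symm hLz)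
    set l := L ^ (1/p) with hldef
    have hlpos : 0 < l := Real.rpow_pos_of_pos hL _
    have hlne : l ≠ 0 := hlpos.ne'
    have hlp : l ^ p = L := by
      rw [hldef, ← Real.rpow_mul hL0, one_div_mul_cancel hp0, Real.rpow_one]
    set m := S.card with hmdef
    set E : Fin m → Fin K := fun i => S.orderEmbOfFin rfl i with hEdef
    have hEmono : StrictMono E := (S.orderEmbOfFin rfl).strictMono
    have hEmem : ∀ i, E i ∈ S := fun i => S.orderEmbOfFin_mem rfl i
    have hEsurj : ∀ k ∈ S, ∃ i, E i = k := by
      intro k hk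
      have h2 : k ∈ Set.range (S.orderEmbOfFin rfl) := by
        rw [Finset.range_orderEmbOfFin]
        exact hk
      exact h2
    have hElt : ∀ i i' : Fin m, ((E i : Fin K) : ℕ) < ((E i' : Fin K) : ℕ) ↔ ((i : ℕ) < (i' : ℕ)) :=
      fun i i' => by rw [← Fin.lt_def, ← Fin.lt_def, hEmono.lt_iff_lt]
    set t'' : Fin (m+1) → EReal :=
      fun i => if h : (i : ℕ) < m then r (Fin.castSucc (E ⟨(i : ℕ), h⟩)) else r (Fin.last K)
      with ht''def
    have ht''cast : ∀ i : Fin m, t'' i.castSucc = r (Fin.castSucc (E i)) := by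
      intro i
      rw [ht''def]; dsimp only
      rw [dif_pos (by simpa using i.isLt)]
      congr 2
    have key : ∀ (i : Fin m) (d : Fin (K+1)), ((E i : ℕ) + 1 ≤ (d : ℕ)) →
        (∀ q : Fin K, (E i : ℕ) < (q : ℕ) → (q : ℕ) < (d : ℕ) → q ∉ S) →
        r (Fin.succ (E i)) = r d := by
      intro i d hle hnot
      refine gap ((d : ℕ) - ((E i : ℕ) + 1)) _ d (by simp [Fin.val_succ]; omega) ?_
      intro q hq1 hq2
      exact hnot q (by simpa [Fin.val_succ] using hq1) hq2
    have ht''succ : ∀ i : Fin m, t'' i.succ = r (Fin.succ (E i)) := by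
      intro i
      rw [ht''def]; dsimp only
      by_cases h : ((i.succ : Fin (m+1)) : ℕ) < m
      · rw [dif_pos h]
        have hiv : ((i : ℕ) : ℕ) < (⟨((i.succ : Fin (m+1)) : ℕ), h⟩ : Fin m) := by
          simp [Fin.val_succ]
        have h1 : (E i : ℕ) < (E ⟨((i.succ : Fin (m+1)) : ℕ), h⟩ : ℕ) := (hElt _ _).2 hiv
        refine (key i _ (by simpa using h1) ?_).symm
        intro q hq1 hq2 hqS
        obtain ⟨i', rfl⟩ := hEsurj q hqS
        have g1 : (i : ℕ) < (i' : ℕ) := (hElt _ _).1 hq1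
        have g2 : (i' : ℕ) < ((i.succ : Fin (m+1)) : ℕ) := by
          have := (hElt i' _).1 (by simpa using hq2)
          simpa using this
        simp [Fin.val_succ] at g2
        omega
      · rw [dif_neg h]
        have hm : ((i : ℕ)) + 1 = m := by
          have h1 := i.isLt
          simp [Fin.val_succ] at h
          omega
        refine (key i (Fin.last K) (by simpa [Fin.val_last] using Nat.succ_le_of_lt (E i).isLt) ?_).symm
        intro q hq1 hq2 hqS
        obtain ⟨i', rfl⟩ := hEsurj q hqS
        have g1 : (i : ℕ) < (i' : ℕ) := (hElt _ _).1 hq1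
        have := i'.isLt
        omega
    have ht''mono : StrictMono t'' := by
      intro i i' hii
      have hi : (i : ℕ) < m := by
        have h1 := i'.isLt
        have h2 : (i : ℕ) < (i' : ℕ) := hii
        omega
      have hrw : t'' i = r (Fin.castSucc (E ⟨(i : ℕ), hi⟩)) := by
        rw [ht''def]; dsimp only; rw [dif_pos hi]
      rw [hrw]
      have h1 : r (Fin.castSucc (E ⟨(i : ℕ), hi⟩)) < r (Fin.succ (E ⟨(i : ℕ), hi⟩)) :=
        (Finset.mem_filter.1 (hEmem ⟨(i : ℕ), hi⟩)).2
      refine lt_of_lt_of_le h1 ?_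
      rw [ht''def]; dsimp only
      by_cases h' : (i' : ℕ) < m
      · rw [dif_pos h']
        have h2 : (E ⟨(i : ℕ), hi⟩ : ℕ) < (E ⟨(i' : ℕ), h'⟩ : ℕ) :=
          (hElt _ _).2 (by simpa using hii)
        exact hrmono (by rw [Fin.le_def]; simp [Fin.val_succ]; omega)
      · rw [dif_neg h']
        exact hrmono (Fin.le_last _)
    set ψ : Fin m → H := fun i => l⁻¹ • φ (E i) with hψdef
    have himg : Finset.image E Finset.univ = S := by
      apply Finset.coe_injective
      rw [Finset.coe_image, Finset.coe_univ, Set.image_univ]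
      exact Finset.range_orderEmbOfFin S rfl
    have hsumE : ∑ i : Fin m, ‖φ (E i)‖ ^ p = L := by
      rw [hLdef, ← himg, Finset.sum_image (fun i _ j _ h => hEmono.injective h)]
    have hψsum : ∑ i : Fin m, ‖ψ i‖ ^ p = 1 := by
      have heach : ∀ i : Fin m, ‖ψ i‖ ^ p = (l ^ p)⁻¹ * ‖φ (E i)‖ ^ p := by
        intro i
        rw [hψdef]; dsimp only
        rw [norm_smul, Real.norm_eq_abs, abs_of_nonneg (inv_nonneg.2 hlpos.le),
          Real.mul_rpow (inv_nonneg.2 hlpos.le) (norm_nonneg _),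
          Real.inv_rpow hlpos.le]
      rw [Finset.sum_congr rfl fun i _ => heach i, ← Finset.mul_sum, hsumE, hlp,
        inv_mul_cancel₀ hLz]
    refine ⟨l, fun x => ∑ i : Fin m,
      if t'' i.castSucc ≤ (x : EReal) ∧ (x : EReal) < t'' i.succ then ψ i else 0,
      hlpos.le, Real.rpow_le_one hL0 hL1 (by positivity),
      ⟨m, t'', ψ, ht''mono, ?_, hψsum, fun x => rfl⟩, ?_⟩
    · rw [ht''def]; dsimp only
      split <;> exact hrbot _
    · intro x
      rw [hstar x, Finset.smul_sum]
      have lhs1 : (∑ k ∈ S, if r k.castSucc ≤ (x : EReal) ∧ (x : EReal) < r k.succ then φ k else 0)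
          = ∑ k : Fin K, if r k.castSucc ≤ (x : EReal) ∧ (x : EReal) < r k.succ then φ k else 0 :=
        Finset.sum_subset S.subset_univ fun k _ hk => if_neg (fun hc => hk (hcond_mem x k hc))
      rw [← lhs1, ← himg, Finset.sum_image (fun i _ j _ h => hEmono.injective h)]
      refine Finset.sum_congr rfl fun i _ => ?_
      rw [smul_ite, smul_zero, hψdef]
      dsimp only
      rw [smul_inv_smul₀ hlne, ht''cast, ht''succ]
lemma rep_step {H : Type*} [NormedAddCommGroup H] [InnerProductSpace ℂ H]
    {p : ℝ} (hp : 1 ≤ p) {u : ℝ → H} {c : ℕ → ℂ} {a : ℕ → ℝ → H}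
    (hrep : IsUpRep p u c a) {n : ℕ} {τ : Fin n → ℝ} (hτ : StrictMono τ) :
    ∃ c' a', IsUpRep p (stepApprox u τ) c' a' ∧ ∀ j, ‖c' j‖ ≤ ‖c j‖ := by
  classical
  obtain ⟨hsum, hatom, hconv⟩ := hrep
  choose l b hl0 hl1 hbatom heq using fun j => atom_step hp (hatom j) hτ
  have hb : ∀ j, ‖c j * (l j : ℂ)‖ ≤ ‖c j‖ := by
    intro j
    rw [norm_mul, Complex.norm_real, Real.norm_eq_abs, abs_of_nonneg (hl0 j)]
    exact mul_le_of_le_one_right (norm_nonneg _) (hl1 j)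
  have hps : ∀ (N : ℕ) (x : ℝ), (∑ j ∈ Finset.range N, (c j * (l j : ℂ)) • b j x)
      = stepApprox (fun y => ∑ j ∈ Finset.range N, c j • a j y) τ x := by
    intro N x
    have h1 : ∀ j, (c j * (l j : ℂ)) • b j x = c j • stepApprox (a j) τ x := by
      intro j
      rw [heq j x, mul_smul, Complex.coe_smul]
    rw [Finset.sum_congr rfl fun j _ => h1 j]
    have h2 : ∀ j, c j • stepApprox (a j) τ x = ∑ i : Fin n,
        if τ i ≤ x ∧ (∀ k, i < k → x < τ k) then c j • a j (τ i) else 0 := by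
      intro j
      unfold stepApprox
      rw [Finset.smul_sum]
      exact Finset.sum_congr rfl fun i _ => by rw [smul_ite, smul_zero]
    rw [Finset.sum_congr rfl fun j _ => h2 j, Finset.sum_comm]
    unfold stepApprox
    refine Finset.sum_congr rfl fun i _ => ?_
    by_cases hc : τ i ≤ x ∧ (∀ k, i < k → x < τ k)
    · simp only [if_pos hc, Finset.sum_smul]
    · simp only [if_neg hc, Finset.sum_const_zero]
  refine ⟨fun j => c j * (l j : ℂ), b,
    ⟨Summable.of_nonneg_of_le (fun j => norm_nonneg _) hb hsum, hbatom, ?_⟩, hb⟩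
  rw [Metric.tendstoUniformly_iff] at hconv ⊢
  intro ε hε
  filter_upwards [hconv ε hε] with N hN x
  rw [hps N x]
  by_cases hex : ∃ i, τ i ≤ x
  · obtain ⟨i₀, hi₀⟩ := exists_cond hex
    rw [stepApprox_eq_of_cond _ hi₀, stepApprox_eq_of_cond _ hi₀]
    exact hN (τ i₀)
  · rw [stepApprox_eq_zero _ hex, stepApprox_eq_zero _ hex]
    simpa using hε

/-- For every `u ∈ U^p(ℝ;H)` and every finite partition
`P = {τ 0 < ⋯ < τ (n-1)}` of `ℝ`, the step function `u_P` belongs to `U^p(ℝ;H)` with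
`‖u_P‖_{U^p(ℝ;H)} ≤ ‖u‖_{U^p(ℝ;H)}`. -/
theorem statement5 {H : Type*} [NormedAddCommGroup H] [InnerProductSpace ℂ H]
    [TopologicalSpace.SeparableSpace H] [CompleteSpace H]
    (p : ℝ) (hp : 1 ≤ p) (u : ℝ → H) (hu : MemUp p u)
    (n : ℕ) (hn : 1 ≤ n) (τ : Fin n → ℝ) (hτ : StrictMono τ) :
    MemUp p (stepApprox u τ) ∧ UpNorm p (stepApprox u τ) ≤ UpNorm p u := by
  constructor
  · obtain ⟨c, a, hrep⟩ := hu
    obtain ⟨c', a', hrep', _⟩ := rep_step hp hrep hτ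
    exact ⟨c', a', hrep'⟩
  · unfold UpNorm
    refine le_csInf ?_ ?_
    · obtain ⟨c, a, hrep⟩ := hu
      exact ⟨_, c, a, hrep, rfl⟩
    · rintro rr ⟨c, a, hrep, rfl⟩
      obtain ⟨c', a', hrep', hb⟩ := rep_step hp hrep hτ
      have hbdd : BddBelow { r | ∃ c a, IsUpRep p (stepApprox u τ) c a ∧ r = ∑' j, ‖c j‖ } := by
        refine ⟨0, ?_⟩
        rintro r ⟨cc, aa, hh, rfl⟩
        exact tsum_nonneg fun j => norm_nonneg _
      have h1 : sInf { r | ∃ c a, IsUpRep p (stepApprox u τ) c a ∧ r = ∑' j, ‖c j‖ }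
          ≤ ∑' j, ‖c' j‖ := csInf_le hbdd ⟨c', a', hrep', rfl⟩
      exact h1.trans (Summable.tsum_le_tsum hb hrep'.1 hrep.1)
end

section
/- Let 1 ≤ p < ∞ and let H be a separable complex Hilbert space. For every u ∈ U^p(ℝ;H) and every ε > 0, there exists a finite partition P of ℝ such that ‖u - u_P‖_{U^p(ℝ;H)} < ε; moreover, every finite partition P' refining P also satisfies ‖u - u_{P'}‖_{U^p(ℝ;H)} < ε. -/
open Filter

/-!
Write `u = ∑ cⱼ aⱼ` and cut the series at `N` so that `∑_{j ≥ N} ‖cⱼ‖ < ε / 2`. If a partition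
contains every finite jump point of `a₀, …, a_{N-1}`, sampling fixes these atoms, so
`u - u_P = v - v_P` for the tail `v = ∑_{j ≥ N} cⱼ aⱼ`. Sampling an atom `∑ φₖ χ_{[tₖ, tₖ₊₁)}` gives
`∑ φₖ χ_{[sₖ, sₖ₊₁)}`, where `sₖ` is the first sample point `≥ tₖ`: the same values on a coarser,
possibly degenerate partition, hence `r • b` with `b` an atom and `0 ≤ r ≤ 1`. So `v_P` has an
atomic representation with coefficients dominated by those of `v`, and
`‖u - u_P‖ ≤ 2 ∑_{j ≥ N} ‖cⱼ‖ < ε`. A refinement of `P` still contains all those jump points.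
-/

open Finset

section StepFun

variable {H : Type*} [NormedAddCommGroup H]

noncomputable def stepFun {K : ℕ} (t : Fin (K + 1) → EReal) (φ : Fin K → H) : ℝ → H :=
  fun x => ∑ k, if t k.castSucc ≤ (x : EReal) ∧ (x : EReal) < t k.succ then φ k else 0

theorem isUpAtom_iff {p : ℝ} {a : ℝ → H} :
    IsUpAtom p a ↔ ∃ (K : ℕ) (t : Fin (K + 1) → EReal) (φ : Fin K → H),
      StrictMono t ∧ t 0 ≠ ⊥ ∧ ∑ k, ‖φ k‖ ^ p = 1 ∧ a = stepFun t φ := by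
  simp only [IsUpAtom, funext_iff, stepFun]

theorem stepFun_eq_zero_or_exists {K : ℕ} {t : Fin (K + 1) → EReal} (ht : Monotone t)
    (φ : Fin K → H) (x : ℝ) : stepFun t φ x = 0 ∨ ∃ k, stepFun t φ x = φ k := by
  by_cases hx : ∃ k : Fin K, t k.castSucc ≤ (x : EReal) ∧ (x : EReal) < t k.succ
  · obtain ⟨k, hk⟩ := hx
    refine Or.inr ⟨k, (sum_eq_single k (fun i _ hik => if_neg ?_) (by simp)).trans (if_pos hk)⟩
    rintro ⟨hi₁, hi₂⟩
    rcases lt_or_gt_of_ne hik with h | h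
    · exact (hi₂.trans_le (ht (Fin.succ_le_castSucc_iff.2 h))).not_ge hk.1
    · exact (hk.2.trans_le (ht (Fin.succ_le_castSucc_iff.2 h))).not_ge hi₁
  · push Not at hx
    exact Or.inl (sum_eq_zero fun k _ => if_neg fun h => (hx k h.1).not_gt h.2)

theorem stepFun_succ {K : ℕ} (t : Fin (K + 2) → EReal) (φ : Fin (K + 1) → H) (x : ℝ) :
    stepFun t φ x = (if t 0 ≤ (x : EReal) ∧ (x : EReal) < t 1 then φ 0 else 0)
      + stepFun (Fin.tail t) (Fin.tail φ) x := by
  simp only [stepFun, Fin.sum_univ_succ, Fin.tail, Fin.succ_castSucc]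
  rfl

theorem stepFun_smul [NormedSpace ℝ H] {K : ℕ} (t : Fin (K + 1) → EReal) (φ : Fin K → H)
    (c : ℝ) : stepFun t (c • φ) = c • stepFun t φ := by
  ext x
  simp only [stepFun, Pi.smul_apply, smul_sum, smul_ite, smul_zero]

theorem exists_strictMono_stepFun_eq (p : ℝ) {K : ℕ} (t : Fin (K + 1) → EReal)
    (ht : Monotone t) (φ : Fin K → H) :
    ∃ (K' : ℕ) (t' : Fin (K' + 1) → EReal) (φ' : Fin K' → H), StrictMono t' ∧ t' 0 = t 0 ∧
      ∑ k, ‖φ' k‖ ^ p ≤ ∑ k, ‖φ k‖ ^ p ∧ stepFun t' φ' = stepFun t φ := by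
  induction K with
  | zero => exact ⟨0, t, φ, Fin.strictMono_iff_lt_succ.2 (fun i => i.elim0), rfl, le_rfl, rfl⟩
  | succ K ih =>
    obtain ⟨K', t', φ', ht', ht'0, hφ', hstep⟩ :=
      ih (Fin.tail t) (ht.comp (Fin.strictMono_succ).monotone) (Fin.tail φ)
    replace ht'0 : t' 0 = t 1 := ht'0
    rw [Fin.sum_univ_succ]
    rcases (ht (Fin.zero_le 1)).eq_or_lt with h01 | h01
    · refine ⟨K', t', φ', ht', ht'0.trans h01.symm, ?_, ?_⟩
      · exact hφ'.trans (le_add_of_nonneg_left (Real.rpow_nonneg (norm_nonneg _) p))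
      · ext x
        rw [stepFun_succ, hstep, if_neg (fun h => h.2.not_ge (h01 ▸ h.1)), zero_add]
    · refine ⟨K' + 1, Fin.cons (t 0) t', Fin.cons (φ 0) φ', ?_, rfl, ?_, ?_⟩
      · refine Fin.strictMono_cons.2 ⟨fun j => h01.trans_le ?_, ht'⟩
        rw [← ht'0]
        exact ht'.monotone (Fin.zero_le j)
      · rw [Fin.sum_univ_succ]
        simpa [Fin.tail] using hφ'
      · ext x
        rw [stepFun_succ, stepFun_succ, Fin.tail_cons, Fin.tail_cons, hstep]
        simp only [Fin.cons_zero, Fin.cons_one, ht'0]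

theorem IsUpAtom.norm_le_one {p : ℝ} (hp : 0 < p) {a : ℝ → H} (ha : IsUpAtom p a) (x : ℝ) :
    ‖a x‖ ≤ 1 := by
  obtain ⟨K, t, φ, ht, -, hφ, rfl⟩ := isUpAtom_iff.1 ha
  rcases stepFun_eq_zero_or_exists ht.monotone φ x with h | ⟨k, h⟩
  · simp [h]
  · rw [h]
    by_contra! hk
    have hle : ‖φ k‖ ^ p ≤ 1 :=
      hφ ▸ single_le_sum (fun i _ => Real.rpow_nonneg (norm_nonneg (φ i)) p) (mem_univ k)
    exact (Real.one_lt_rpow hk hp).not_ge hle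

theorem exists_isUpAtom_smul_eq_stepFun [NormedSpace ℝ H] {p : ℝ} (hp : 0 < p) {K : ℕ}
    {t : Fin (K + 1) → EReal} (ht : StrictMono t) (ht0 : t 0 ≠ ⊥) {φ : Fin K → H}
    (hφ : 0 < ∑ k, ‖φ k‖ ^ p) :
    ∃ b, IsUpAtom p b ∧ stepFun t φ = (∑ k, ‖φ k‖ ^ p) ^ (1 / p) • b := by
  set S := ∑ k, ‖φ k‖ ^ p
  have hr : 0 < S ^ (1 / p) := Real.rpow_pos_of_pos hφ _
  refine ⟨stepFun t ((S ^ (1 / p))⁻¹ • φ), isUpAtom_iff.2 ⟨K, t, _, ht, ht0, ?_, rfl⟩, ?_⟩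
  · calc ∑ k, ‖((S ^ (1 / p))⁻¹ • φ) k‖ ^ p = ((S ^ (1 / p)) ^ p)⁻¹ * S := by
          simp only [Pi.smul_apply, norm_smul, norm_inv, Real.norm_of_nonneg hr.le,
            Real.mul_rpow (inv_nonneg.2 hr.le) (norm_nonneg _), Real.inv_rpow hr.le, mul_sum, S]
      _ = 1 := by
          rw [← Real.rpow_mul hφ.le, one_div_mul_cancel hp.ne', Real.rpow_one,
            inv_mul_cancel₀ hφ.ne']
  · rw [stepFun_smul, smul_smul, mul_inv_cancel₀ hr.ne', one_smul]

end StepFun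

section Sampling

variable {H : Type*} [NormedAddCommGroup H] {m : ℕ} {τ : Fin m → ℝ}

/-- The least sample point `τ j` lying above `y`, or `⊤` if there is none. -/
noncomputable def sampleCeil (τ : Fin m → ℝ) (y : EReal) : EReal :=
  (univ.filter fun j => y ≤ (τ j : EReal)).inf fun j => (τ j : EReal)

theorem le_sampleCeil (τ : Fin m → ℝ) (y : EReal) : y ≤ sampleCeil τ y :=
  Finset.le_inf fun _ hj => (mem_filter.1 hj).2

theorem sampleCeil_mono (τ : Fin m → ℝ) : Monotone (sampleCeil τ) :=
  fun _ _ hyy' => inf_mono fun _ hj => mem_filter.2 ⟨mem_univ _, hyy'.trans (mem_filter.1 hj).2⟩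

theorem sampleCeil_le_coe_iff (y : EReal) (x : ℝ) :
    sampleCeil τ y ≤ x ↔ ∃ j, y ≤ τ j ∧ τ j ≤ x := by
  simp [sampleCeil, Finset.inf_le_iff (EReal.coe_lt_top x)]

theorem sampleCeil_eq_self {y : EReal} (hy : y ≠ ⊤ → ∃ j, (τ j : EReal) = y) :
    sampleCeil τ y = y := by
  refine le_antisymm ?_ (le_sampleCeil τ y)
  rcases eq_or_ne y ⊤ with rfl | hy'
  · exact le_top
  · obtain ⟨j, rfl⟩ := hy hy'
    exact inf_le (mem_filter.2 ⟨mem_univ j, le_rfl⟩)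

theorem stepApprox_eq_zero_of_lt (u : ℝ → H) {x : ℝ} (hx : ∀ j, x < τ j) :
    stepApprox u τ x = 0 :=
  sum_eq_zero fun j _ => if_neg fun h => (hx j).not_ge h.1

theorem exists_stepApprox_eq (u : ℝ → H) (hτ : StrictMono τ) {x : ℝ} (hx : ∃ j, τ j ≤ x) :
    ∃ J, τ J ≤ x ∧ (∀ i, τ i ≤ x → τ i ≤ τ J) ∧ stepApprox u τ x = u (τ J) := by
  obtain ⟨j, hj⟩ := hx
  obtain ⟨J, hJ, hmax⟩ := (univ.filter fun i => τ i ≤ x).exists_max_image τ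
    ⟨j, mem_filter.2 ⟨mem_univ j, hj⟩⟩
  simp only [mem_filter, mem_univ, true_and] at hJ hmax
  have hafter : ∀ k, J < k → x < τ k := fun k hk =>
    lt_of_not_ge fun hkx => (hmax k hkx).not_gt (hτ hk)
  refine ⟨J, hJ, hmax, (sum_eq_single J (fun i _ hiJ => if_neg ?_) (by simp)).trans
    (if_pos ⟨hJ, hafter⟩)⟩
  rintro ⟨hi, hi'⟩
  rcases lt_or_gt_of_ne hiJ with h | h
  · exact (hi' J h).not_ge hJ
  · exact (hmax i hi).not_gt (hτ h)

theorem stepApprox_stepFun (hτ : StrictMono τ) {K : ℕ} (t : Fin (K + 1) → EReal)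
    (φ : Fin K → H) : stepApprox (stepFun t φ) τ = stepFun (sampleCeil τ ∘ t) φ := by
  ext x
  by_cases hx : ∃ j, τ j ≤ x
  · obtain ⟨J, hJx, hJmax, hJ⟩ := exists_stepApprox_eq (stepFun t φ) hτ hx
    have key : ∀ y, sampleCeil τ y ≤ x ↔ y ≤ τ J := fun y => by
      rw [sampleCeil_le_coe_iff]
      exact ⟨fun ⟨j, hyj, hjx⟩ => hyj.trans (EReal.coe_le_coe_iff.2 (hJmax j hjx)),
        fun h => ⟨J, h, hJx⟩⟩
    simp only [hJ, stepFun, Function.comp_apply, ← not_le, key]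
  · push Not at hx
    rw [stepApprox_eq_zero_of_lt _ hx]
    refine (sum_eq_zero fun k _ => if_neg fun h => ?_).symm
    obtain ⟨j, -, hj⟩ := (sampleCeil_le_coe_iff _ x).1 h.1
    exact (hx j).not_ge hj

theorem stepApprox_stepFun_of_forall_mem (hτ : StrictMono τ) {K : ℕ}
    {t : Fin (K + 1) → EReal} (ht : Monotone t) (ht0 : t 0 ≠ ⊥)
    (hτt : ∀ k, t k ≠ ⊤ → (t k).toReal ∈ Set.range τ) (φ : Fin K → H) :
    stepApprox (stepFun t φ) τ = stepFun t φ := by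
  rw [stepApprox_stepFun hτ]
  congr 1
  refine funext fun k => sampleCeil_eq_self fun hk => ?_
  obtain ⟨j, hj⟩ := hτt k hk
  exact ⟨j, by rw [hj, EReal.coe_toReal hk (ne_bot_of_le_ne_bot ht0 (ht (Fin.zero_le k)))]⟩

theorem IsUpAtom.exists_smul_eq_stepApprox [NormedSpace ℝ H] {p : ℝ} (hp : 0 < p)
    {a : ℝ → H} (ha : IsUpAtom p a) (hτ : StrictMono τ) :
    ∃ r : ℝ, 0 ≤ r ∧ r ≤ 1 ∧ ∃ b, IsUpAtom p b ∧ stepApprox a τ = r • b := by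
  obtain ⟨K, t, φ, ht, ht0, hφ, rfl⟩ := isUpAtom_iff.1 ha
  obtain ⟨K', t', φ', ht', ht'0, hφ', heq⟩ :=
    exists_strictMono_stepFun_eq p (sampleCeil τ ∘ t) ((sampleCeil_mono τ).comp ht.monotone) φ
  rw [stepApprox_stepFun hτ, ← heq]
  replace ht'0 : t' 0 ≠ ⊥ := ht'0 ▸ ne_bot_of_le_ne_bot ht0 (le_sampleCeil τ _)
  rcases (sum_nonneg fun k _ => Real.rpow_nonneg (norm_nonneg (φ' k)) p).eq_or_lt with h0 | hpos
  · refine ⟨0, le_rfl, zero_le_one, _, ha, ?_⟩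
    have hφ'0 : φ' = 0 := funext fun k => by
      have := (sum_eq_zero_iff_of_nonneg fun i _ => Real.rpow_nonneg (norm_nonneg (φ' i)) p).1
        h0.symm k (mem_univ k)
      simpa [Real.rpow_eq_zero (norm_nonneg _) hp.ne'] using this
    ext x
    simp [hφ'0, stepFun]
  · obtain ⟨b, hb, hbeq⟩ := exists_isUpAtom_smul_eq_stepFun hp ht' ht'0 hpos
    exact ⟨_, Real.rpow_nonneg hpos.le _,
      Real.rpow_le_one hpos.le (hφ'.trans hφ.le) (by positivity), b, hb, hbeq⟩

variable (τ) in
noncomputable def stepApproxₗ (R : Type*) [Semiring R] [Module R H] : (ℝ → H) →ₗ[R] ℝ → H where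
  toFun u := stepApprox u τ
  map_add' u v := by
    ext x
    simp only [stepApprox, Pi.add_apply, ← sum_add_distrib, ite_add_ite, add_zero]
  map_smul' c u := by
    ext x
    simp only [stepApprox, Pi.smul_apply, RingHom.id_apply, smul_sum, smul_ite, smul_zero]

theorem stepApprox_smul {R : Type*} [Semiring R] [Module R H] (c : R) (u : ℝ → H) :
    stepApprox (c • u) τ = c • stepApprox u τ :=
  map_smul (stepApproxₗ τ R) c u

theorem stepApprox_sub (u v : ℝ → H) : stepApprox (u - v) τ = stepApprox u τ - stepApprox v τ :=
  map_sub (stepApproxₗ τ ℤ) u v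

theorem stepApprox_sum {ι : Type*} (s : Finset ι) (f : ι → ℝ → H) :
    stepApprox (∑ i ∈ s, f i) τ = ∑ i ∈ s, stepApprox (f i) τ :=
  map_sum (stepApproxₗ τ ℕ) f s

theorem hasSum_stepApprox {ι : Type*} {g : ι → ℝ → H} {u : ℝ → H}
    (h : ∀ j, HasSum (fun i => g i (τ j)) (u (τ j))) (x : ℝ) :
    HasSum (fun i => stepApprox (g i) τ x) (stepApprox u τ x) :=
  hasSum_sum fun j _ => by
    by_cases hj : τ j ≤ x ∧ ∀ k, j < k → x < τ k
    · simpa only [if_pos hj] using h j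
    · simpa only [if_neg hj] using hasSum_zero

end Sampling

section Interleave

variable {α : Type*}

theorem interleave_two_mul (f g : ℕ → α) (k : ℕ) : (f ⋈ g) (2 * k) = f k :=
  Stream'.get_interleave_left k f g

theorem interleave_two_mul_add_one (f g : ℕ → α) (k : ℕ) : (f ⋈ g) (2 * k + 1) = g k :=
  Stream'.get_interleave_right k f g

theorem hasSum_norm_interleave_neg {E : Type*} [SeminormedAddCommGroup E] {f g : ℕ → E}
    (hf : Summable fun j => ‖f j‖) (hg : Summable fun j => ‖g j‖) :
    HasSum (fun i => ‖(f ⋈ -g) i‖) (∑' j, ‖f j‖ + ∑' j, ‖g j‖) :=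
  HasSum.even_add_odd (by simpa [interleave_two_mul] using hf.hasSum)
    (by simpa [interleave_two_mul_add_one] using hg.hasSum)

end Interleave

section Representation

variable {H : Type*} [NormedAddCommGroup H] [InnerProductSpace ℂ H] {p : ℝ} {u v : ℝ → H}
  {c d : ℕ → ℂ} {a b : ℕ → ℝ → H}

theorem IsUpAtom.norm_smul_le (hp : 0 < p) {a : ℝ → H} (ha : IsUpAtom p a) (c : ℂ) (x : ℝ) :
    ‖c • a x‖ ≤ ‖c‖ := by
  rw [norm_smul]
  exact mul_le_of_le_one_right (norm_nonneg c) (ha.norm_le_one hp x)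

theorem IsUpRep.hasSum (hp : 0 < p) (h : IsUpRep p u c a) (x : ℝ) :
    HasSum (fun j => c j • a j x) (u x) :=
  (hasSum_iff_tendsto_nat_of_summable_norm (h.1.of_nonneg_of_le (fun _ => norm_nonneg _)
    fun j => (h.2.1 j).norm_smul_le hp (c j) x)).2 (h.2.2.tendsto_at x)

theorem isUpRep_of_hasSum (hp : 0 < p) (hc : Summable fun j => ‖c j‖)
    (ha : ∀ j, IsUpAtom p (a j)) (hu : ∀ x, HasSum (fun j => c j • a j x) (u x)) :
    IsUpRep p u c a := by
  refine ⟨hc, ha, Metric.tendstoUniformly_iff.2 fun ε hε => ?_⟩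
  filter_upwards [(tendsto_sum_nat_add fun j => ‖c j‖).eventually (gt_mem_nhds hε)] with N hN x
  rw [dist_eq_norm]
  exact (((hasSum_nat_add_iff' N).2 (hu x)).norm_le_of_bounded
    ((summable_nat_add_iff N).2 hc).hasSum fun k => (ha _).norm_smul_le hp _ x).trans_lt hN

theorem IsUpRep.upNorm_le (h : IsUpRep p u c a) : UpNorm p u ≤ ∑' j, ‖c j‖ :=
  csInf_le ⟨0, fun _ ⟨_, _, _, hr⟩ => hr ▸ tsum_nonneg fun _ => norm_nonneg _⟩ ⟨c, a, h, rfl⟩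

theorem IsUpRep.sub_sum_range (hp : 0 < p) (h : IsUpRep p u c a) (N : ℕ) :
    IsUpRep p (u - ∑ j ∈ range N, c j • a j) (fun k => c (k + N)) (fun k => a (k + N)) :=
  isUpRep_of_hasSum hp ((summable_nat_add_iff N).2 h.1) (fun k => h.2.1 _) fun x => by
    simpa [Finset.sum_apply] using (hasSum_nat_add_iff' N).2 (h.hasSum hp x)

theorem IsUpRep.sub (hp : 0 < p) (hu : IsUpRep p u c a) (hv : IsUpRep p v d b) :
    IsUpRep p (u - v) (c ⋈ -d) (a ⋈ b) := by
  refine isUpRep_of_hasSum hp (hasSum_norm_interleave_neg hu.1 hv.1).summable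
    (fun i => ?_) fun x => ?_
  · obtain ⟨k, rfl | rfl⟩ := Nat.even_or_odd' i
    · simpa [interleave_two_mul] using hu.2.1 k
    · simpa [interleave_two_mul_add_one] using hv.2.1 k
  · rw [Pi.sub_apply, sub_eq_add_neg]
    exact HasSum.even_add_odd (by simpa [interleave_two_mul] using hu.hasSum hp x)
      (by simpa [interleave_two_mul_add_one] using (hv.hasSum hp x).neg)

theorem IsUpRep.memUp_sub (hp : 0 < p) (hu : IsUpRep p u c a) (hv : IsUpRep p v d b) :
    MemUp p (u - v) ∧ UpNorm p (u - v) ≤ ∑' j, ‖c j‖ + ∑' j, ‖d j‖ :=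
  ⟨⟨_, _, hu.sub hp hv⟩,
    (hu.sub hp hv).upNorm_le.trans_eq (hasSum_norm_interleave_neg hu.1 hv.1).tsum_eq⟩

theorem IsUpRep.exists_stepApprox (hp : 0 < p) (h : IsUpRep p u c a) {m : ℕ}
    {τ : Fin m → ℝ} (hτ : StrictMono τ) :
    ∃ d b, IsUpRep p (stepApprox u τ) d b ∧ ∀ j, ‖d j‖ ≤ ‖c j‖ := by
  choose r hr0 hr1 b hb hab using fun j => (h.2.1 j).exists_smul_eq_stepApprox hp hτ
  have hd : ∀ j, ‖c j * r j‖ ≤ ‖c j‖ := fun j => by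
    rw [norm_mul, Complex.norm_real, Real.norm_of_nonneg (hr0 j)]
    exact mul_le_of_le_one_right (norm_nonneg _) (hr1 j)
  refine ⟨fun j => c j * r j, b, isUpRep_of_hasSum hp
    (h.1.of_nonneg_of_le (fun _ => norm_nonneg _) hd) hb fun x => ?_, hd⟩
  convert hasSum_stepApprox (g := fun j => c j • a j) (fun j => h.hasSum hp (τ j)) x using 2
    with j
  rw [stepApprox_smul, hab, mul_smul, Complex.coe_smul]
  rfl

theorem IsUpRep.memUp_sub_stepApprox (hp : 0 < p) (h : IsUpRep p u c a) {N m : ℕ}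
    {τ : Fin m → ℝ} (hτ : StrictMono τ) (hfix : ∀ j < N, stepApprox (a j) τ = a j) :
    MemUp p (u - stepApprox u τ) ∧ UpNorm p (u - stepApprox u τ) ≤ 2 * ∑' k, ‖c (k + N)‖ := by
  set S := ∑ j ∈ range N, c j • a j
  have hS : stepApprox S τ = S := (stepApprox_sum _ _).trans <| sum_congr rfl
    fun j hj => by rw [stepApprox_smul, hfix j (mem_range.1 hj)]
  have htail := h.sub_sum_range hp N
  obtain ⟨d, b, hd, hdc⟩ := htail.exists_stepApprox hp hτ
  obtain ⟨hmem, hle⟩ := htail.memUp_sub hp hd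
  rw [stepApprox_sub, hS, sub_sub_sub_cancel_right] at hmem hle
  rw [two_mul]
  exact ⟨hmem, hle.trans (add_le_add le_rfl (hd.1.tsum_le_tsum hdc htail.1))⟩

end Representation

theorem statement6_general {H : Type*} [NormedAddCommGroup H] [InnerProductSpace ℂ H]
    (p : ℝ) (hp : 1 ≤ p) (u : ℝ → H) (hu : MemUp p u) (ε : ℝ) (hε : 0 < ε) :
    ∃ (n : ℕ) (τ : Fin n → ℝ), 1 ≤ n ∧ StrictMono τ ∧
      (MemUp p (u - stepApprox u τ) ∧ UpNorm p (u - stepApprox u τ) < ε) ∧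
      (∀ (m : ℕ) (τ' : Fin m → ℝ), StrictMono τ' → Set.range τ ⊆ Set.range τ' →
        MemUp p (u - stepApprox u τ') ∧ UpNorm p (u - stepApprox u τ') < ε) := by
  obtain ⟨c, a, hrep⟩ := hu
  have hp0 : 0 < p := zero_lt_one.trans_le hp
  obtain ⟨N, hN⟩ : ∃ N, 2 * ∑' k, ‖c (k + N)‖ < ε :=
    (((tendsto_sum_nat_add fun j => ‖c j‖).const_mul 2).eventually
      (gt_mem_nhds (by simpa using hε))).exists
  choose K t φ ht ht0 _ ha using fun j => isUpAtom_iff.1 (hrep.2.1 j)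
  -- `0` only makes the partition nonempty when `N = 0`.
  set F : Finset ℝ := insert 0 ((range N).biUnion fun j => univ.image fun k => (t j k).toReal)
  have hsmall : ∀ m (τ' : Fin m → ℝ), StrictMono τ' → ↑F ⊆ Set.range τ' →
      MemUp p (u - stepApprox u τ') ∧ UpNorm p (u - stepApprox u τ') < ε := by
    refine fun m τ' hτ' hF => (hrep.memUp_sub_stepApprox hp0 hτ' fun j hj => ?_).imp_right
      fun hle => hle.trans_lt hN
    rw [ha j]
    refine stepApprox_stepFun_of_forall_mem hτ' (ht j).monotone (ht0 j) (fun k _ => hF ?_) (φ j)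
    exact mem_insert_of_mem <| mem_biUnion.2 ⟨j, mem_range.2 hj, mem_image_of_mem _ (mem_univ k)⟩
  have hrange : Set.range (F.orderEmbOfFin rfl) = F := range_orderEmbOfFin F rfl
  exact ⟨F.card, F.orderEmbOfFin rfl, card_pos.2 (insert_nonempty _ _),
    (F.orderEmbOfFin rfl).strictMono, hsmall _ _ (F.orderEmbOfFin rfl).strictMono hrange.ge,
    fun m τ' hτ' hsub => hsmall m τ' hτ' (hrange ▸ hsub)⟩

/-- For every `u ∈ U^p(ℝ;H)` and every `ε > 0` there exists a finite
partition `P` of `ℝ` such that `‖u - u_P‖_{U^p(ℝ;H)} < ε`; moreover every finite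
partition refining `P` has the same property. -/
theorem statement6 {H : Type*} [NormedAddCommGroup H] [InnerProductSpace ℂ H]
    [TopologicalSpace.SeparableSpace H] [CompleteSpace H]
    (p : ℝ) (hp : 1 ≤ p) (u : ℝ → H) (hu : MemUp p u) (ε : ℝ) (hε : 0 < ε) :
    ∃ (n : ℕ) (τ : Fin n → ℝ), 1 ≤ n ∧ StrictMono τ ∧
      (MemUp p (u - stepApprox u τ) ∧ UpNorm p (u - stepApprox u τ) < ε) ∧
      (∀ (m : ℕ) (τ' : Fin m → ℝ), StrictMono τ' → Set.range τ ⊆ Set.range τ' →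
        MemUp p (u - stepApprox u τ') ∧ UpNorm p (u - stepApprox u τ') < ε) :=
  statement6_general p hp u hu ε hε
end
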